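/- arXiv:1810.01145 — 4 statements merged into one kernel-verified Lean document; each statement's English description precedes it below -/
import Mathlib

section
/- Let φ: [0,∞) → [0,∞) be a continuous function with φ(0)=0, and suppose there exist constants A>0, B≥0 and 0≤α<1 such that φ(t) ≤ A∫₀ᵗ φ(s) ds + B∫₀ᵗ φ(s)^α ds for all t≥0. Then φ(t) ≤ ((B/A)(e^{(1-α)At} - 1))^{1/(1-α)} for all t≥0. -/
/-!
For `ε > 0` put `u x = ε + ∫₀ˣ (A φ + B φ ^ α)`. Then `φ ≤ u`, `u > 0` and
`u' = A φ + B φ ^ α ≤ A u + B u ^ α`. The Bernoulli substitution `v = u ^ (1 - α)` turns this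
into the linear inequality `v' ≤ (1 - α) (A v + B)`, so the classical Grönwall bound applies
to `v`; letting `ε → 0` gives the claim.
-/

open MeasureTheory intervalIntegral Real Set Filter Topology

theorem rpow_neg_mul_add_rpow {u : ℝ} (hu : 0 < u) (A B α : ℝ) :
    u ^ (-α) * (A * u + B * u ^ α) = A * u ^ (1 - α) + B := by
  rw [mul_add, mul_left_comm, ← rpow_add_one hu.ne', mul_left_comm, ← rpow_add hu]
  simp [neg_add_eq_sub]

theorem rpow_one_sub_le_of_deriv_le {u u' : ℝ → ℝ} {A B α a b : ℝ} (hA : A ≠ 0)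
    (hα : α < 1) (hab : a ≤ b) (hcont : ContinuousOn u (Icc a b))
    (hpos : ∀ x ∈ Icc a b, 0 < u x)
    (hderiv : ∀ x ∈ Ico a b, HasDerivWithinAt u (u' x) (Ici x) x)
    (hbound : ∀ x ∈ Ico a b, u' x ≤ A * u x + B * u x ^ α) :
    u b ^ (1 - α) ≤ u a ^ (1 - α) * exp ((1 - α) * A * (b - a))
      + B / A * (exp ((1 - α) * A * (b - a)) - 1) := by
  have h1α : 0 < 1 - α := sub_pos.2 hα
  have hK : (1 - α) * A ≠ 0 := mul_ne_zero h1α.ne' hA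
  have hv := le_gronwallBound_of_liminf_deriv_right_le (f := fun x => u x ^ (1 - α))
    (f' := fun x => u' x * (1 - α) * u x ^ (1 - α - 1)) (K := (1 - α) * A) (ε := (1 - α) * B)
    (hcont.rpow_const fun x hx => Or.inl (hpos x hx).ne')
    (fun x hx _ hr => ((hderiv x hx).rpow_const
      (Or.inl (hpos x (Ico_subset_Icc_self hx)).ne')).liminf_right_slope_le hr)
    le_rfl
    (fun x hx => by
      have hux := hpos x (Ico_subset_Icc_self hx)
      calc u' x * (1 - α) * u x ^ (1 - α - 1)
          = (1 - α) * (u x ^ (-α) * u' x) := by rw [sub_sub_cancel_left]; ring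
        _ ≤ (1 - α) * (u x ^ (-α) * (A * u x + B * u x ^ α)) := by
          gcongr
          exact hbound x hx
        _ = (1 - α) * A * u x ^ (1 - α) + (1 - α) * B := by
          rw [rpow_neg_mul_add_rpow hux]; ring)
    b ⟨hab, le_rfl⟩
  rwa [gronwallBound_of_K_ne_0 hK, mul_div_mul_left _ _ h1α.ne'] at hv

theorem tendsto_rpow_mul_add_nhdsGT_zero {p : ℝ} (hp : 0 < p) (E C : ℝ) :
    Tendsto (fun ε : ℝ => ε ^ p * E + C) (𝓝[>] 0) (𝓝 C) := by
  have := ((continuous_id.rpow_const fun _ => Or.inr hp.le).mul_const E).add_const C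
  simpa [zero_rpow hp.ne'] using (this.tendsto 0).mono_left nhdsWithin_le_nhds

theorem rpow_one_sub_le_of_le_integral {φ : ℝ → ℝ} (hcont : Continuous φ)
    (hnn : ∀ t, 0 ≤ φ t) {A B α : ℝ} (hA : 0 < A) (hB : 0 ≤ B) (hα0 : 0 ≤ α)
    (hα1 : α < 1)
    (h : ∀ t, 0 ≤ t →
      φ t ≤ A * (∫ s in (0:ℝ)..t, φ s) + B * (∫ s in (0:ℝ)..t, (φ s) ^ α))
    {ε t : ℝ} (hε : 0 < ε) (ht : 0 ≤ t) :
    φ t ^ (1 - α) ≤ ε ^ (1 - α) * exp ((1 - α) * A * t)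
      + B / A * (exp ((1 - α) * A * t) - 1) := by
  set g : ℝ → ℝ := fun s => A * φ s + B * φ s ^ α
  have hφα : Continuous fun s => φ s ^ α := hcont.rpow_const fun _ => Or.inr hα0
  have hg : Continuous g := (continuous_const.mul hcont).add (continuous_const.mul hφα)
  have hg_nonneg : ∀ s, 0 ≤ g s := fun s => by
    have := hnn s; have := rpow_nonneg (hnn s) α; positivity
  set u : ℝ → ℝ := fun x => ε + ∫ s in (0:ℝ)..x, g s
  have hu_deriv : ∀ x, HasDerivAt u (g x) x := fun x =>
    (hg.integral_hasStrictDerivAt 0 x).hasDerivAt.const_add ε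
  have hu_pos : ∀ x, 0 ≤ x → 0 < u x := fun x hx =>
    add_pos_of_pos_of_nonneg hε (integral_nonneg hx fun s _ => hg_nonneg s)
  have hφ_le_u : ∀ x, 0 ≤ x → φ x ≤ u x := fun x hx => by
    have hsplit : ∫ s in (0:ℝ)..x, g s
        = A * (∫ s in (0:ℝ)..x, φ s) + B * (∫ s in (0:ℝ)..x, φ s ^ α) := by
      rw [← intervalIntegral.integral_const_mul, ← intervalIntegral.integral_const_mul,
        ← integral_add ((hcont.intervalIntegrable 0 x).const_mul A)
          ((hφα.intervalIntegrable 0 x).const_mul B)]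
    have := h x hx
    simp only [u, hsplit]
    linarith
  have hu := rpow_one_sub_le_of_deriv_le (u := u) hA.ne' hα1 ht
    (fun x _ => (hu_deriv x).continuousAt.continuousWithinAt)
    (fun x hx => hu_pos x hx.1) (fun x _ => (hu_deriv x).hasDerivWithinAt)
    (fun x hx => by
      have hφu := hφ_le_u x hx.1
      have := hnn x
      exact add_le_add (by gcongr) (by gcongr))
  simp only [u, integral_same, add_zero, sub_zero] at hu
  exact (rpow_le_rpow (hnn t) (hφ_le_u t ht) (sub_pos.2 hα1).le).trans hu

theorem nonlinear_gronwall_general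
    (φ : ℝ → ℝ) (hcont : Continuous φ) (hnn : ∀ t, 0 ≤ φ t)
    (A B α : ℝ) (hA : 0 < A) (hB : 0 ≤ B) (hα0 : 0 ≤ α) (hα1 : α < 1)
    (h : ∀ t, 0 ≤ t →
      φ t ≤ A * (∫ s in (0:ℝ)..t, φ s) + B * (∫ s in (0:ℝ)..t, (φ s) ^ α)) :
    ∀ t, 0 ≤ t →
      φ t ≤ ((B / A) * (Real.exp ((1 - α) * A * t) - 1)) ^ (1 / (1 - α)) := by
  intro t ht
  have h1α : 0 < 1 - α := sub_pos.2 hα1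
  have hC : 0 ≤ B / A * (exp ((1 - α) * A * t) - 1) :=
    mul_nonneg (div_nonneg hB hA.le) (sub_nonneg.2 (one_le_exp (by positivity)))
  have hφt : φ t ^ (1 - α) ≤ B / A * (exp ((1 - α) * A * t) - 1) :=
    ge_of_tendsto (tendsto_rpow_mul_add_nhdsGT_zero h1α _ _) <|
      eventually_nhdsWithin_of_forall fun ε hε =>
        rpow_one_sub_le_of_le_integral hcont hnn hA hB hα0 hα1 h hε ht
  rw [one_div]
  exact (le_rpow_inv_iff_of_pos (hnn t) hC h1α).2 hφt

theorem nonlinear_gronwall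
    (φ : ℝ → ℝ) (hcont : Continuous φ) (hnn : ∀ t, 0 ≤ φ t) (hφ0 : φ 0 = 0)
    (A B α : ℝ) (hA : 0 < A) (hB : 0 ≤ B) (hα0 : 0 ≤ α) (hα1 : α < 1)
    (h : ∀ t, 0 ≤ t →
      φ t ≤ A * (∫ s in (0:ℝ)..t, φ s) + B * (∫ s in (0:ℝ)..t, (φ s) ^ α)) :
    ∀ t, 0 ≤ t →
      φ t ≤ ((B / A) * (Real.exp ((1 - α) * A * t) - 1)) ^ (1 / (1 - α)) :=
  nonlinear_gronwall_general φ hcont hnn A B α hA hB hα0 hα1 h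
end

section
/- Let G: ℝ → ℝ be an odd, increasing function, let n ∈ ℕ, and let x₁,…,xₙ, y₁,…,yₙ be real numbers. Then the double sum ∑_{i=1}^n ∑_{j=1}^n (G(x_i - x_j) - G(y_i - y_j))·(x_i - y_i) is nonnegative. -/
theorem double_sum_monotone_nonneg
    (G : ℝ → ℝ) (hodd : ∀ x, G (-x) = -G x) (hmono : Monotone G)
    (n : ℕ) (x y : Fin n → ℝ) :
    0 ≤ ∑ i : Fin n, ∑ j : Fin n,
        (G (x i - x j) - G (y i - y j)) * (x i - y i) := by
  have key : ∀ a b : ℝ, 0 ≤ (G a - G b) * (a - b) := by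
    intro a b
    rcases le_total a b with h | h
    · nlinarith [sub_nonpos.2 (hmono h), sub_nonpos.2 h]
    · exact mul_nonneg (sub_nonneg.2 (hmono h)) (sub_nonneg.2 h)
  set S := ∑ i : Fin n, ∑ j : Fin n,
      (G (x i - x j) - G (y i - y j)) * (x i - y i) with hS
  have hswap : S = ∑ i : Fin n, ∑ j : Fin n,
      (G (x j - x i) - G (y j - y i)) * (x j - y j) := by
    rw [hS, Finset.sum_comm]
  have h2 : S + S = ∑ i : Fin n, ∑ j : Fin n,
      (G (x i - x j) - G (y i - y j)) * ((x i - y i) - (x j - y j)) := by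
    rw [hS]
    nth_rewrite 2 [Finset.sum_comm]
    rw [← Finset.sum_add_distrib]
    refine Finset.sum_congr rfl fun i _ => ?_
    rw [← Finset.sum_add_distrib]
    refine Finset.sum_congr rfl fun j _ => ?_
    have h1 : G (x j - x i) = - G (x i - x j) := by
      rw [← hodd]; ring_nf
    have h2 : G (y j - y i) = - G (y i - y j) := by
      rw [← hodd]; ring_nf
    rw [h1, h2]; ring
  have hpos : 0 ≤ S + S := by
    rw [h2]
    refine Finset.sum_nonneg fun i _ => Finset.sum_nonneg fun j _ => ?_
    have := key (x i - x j) (y i - y j)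
    have heq : (x i - x j) - (y i - y j) = (x i - y i) - (x j - y j) := by ring
    rwa [heq] at this
  linarith
end

section
/- Let ξ, η: [0,∞) → [0,∞) be differentiable functions and let g > 0, C > 0, χ > 0 be constants with g > 2C. Suppose that for every t ≥ 0: if η(t) ≤ ξ(t) and ξ(t) ≥ χ then ξ'(t) ≤ 0, and if ξ(t) ≤ η(t) and η(t) ≥ χ then η'(t) ≤ 0. Then for all t ≥ 0, max(ξ(t), η(t)) ≤ max{χ, ξ(0), η(0)}. -/
open Set Filter Topology

theorem two_function_comparison
    (ξ η : ℝ → ℝ) (hξ : Differentiable ℝ ξ) (hη : Differentiable ℝ η)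
    (hξnn : ∀ t, 0 ≤ ξ t) (hηnn : ∀ t, 0 ≤ η t)
    (g C χ : ℝ) (hg : 0 < g) (hC : 0 < C) (hχ : 0 < χ) (hgC : 2 * C < g)
    (h1 : ∀ t, 0 ≤ t → η t ≤ ξ t → χ ≤ ξ t → deriv ξ t ≤ 0)
    (h2 : ∀ t, 0 ≤ t → ξ t ≤ η t → χ ≤ η t → deriv η t ≤ 0) :
    ∀ t, 0 ≤ t → max (ξ t) (η t) ≤ max χ (max (ξ 0) (η 0)) := by
  intro t ht
  set K : ℝ := max χ (max (ξ 0) (η 0)) with hK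
  set φ : ℝ → ℝ := fun x => max (ξ x) (η x) with hφ
  have hχK : χ ≤ K := le_max_left _ _
  have hcont : Continuous φ := hξ.continuous.max hη.continuous
  set f' : ℝ → ℝ := fun x =>
    if ξ x = η x then max (deriv ξ x) (deriv η x)
    else if η x < ξ x then deriv ξ x else deriv η x with hf'def
  have hsξ : ∀ x, Tendsto (slope ξ x) (𝓝[>] x) (𝓝 (deriv ξ x)) := fun x =>
    (hasDerivAt_iff_tendsto_slope.1 (hξ x).hasDerivAt).mono_left
      (nhdsWithin_mono x (fun z hz => ne_of_gt hz))
  have hsη : ∀ x, Tendsto (slope η x) (𝓝[>] x) (𝓝 (deriv η x)) := fun x =>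
    (hasDerivAt_iff_tendsto_slope.1 (hη x).hasDerivAt).mono_left
      (nhdsWithin_mono x (fun z hz => ne_of_gt hz))
  have key : ∀ ε : ℝ, 0 < ε → φ t ≤ K + ε * (t + 1) := by
    intro ε hε
    have main := image_le_of_liminf_slope_right_lt_deriv_boundary'
      (f := φ) (f' := f') (a := 0) (b := t)
      (hcont.continuousOn)
      (by
        intro x _ r hr
        rcases lt_trichotomy (ξ x) (η x) with hlt | heq | hgt
        · have hnear : ∀ᶠ z in 𝓝 x, ξ z < η z :=
            (hξ.continuous.continuousAt).eventually_lt (hη.continuous.continuousAt) hlt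
          have hfx : f' x = deriv η x := by
            simp only [hf'def]
            rw [if_neg (ne_of_lt hlt), if_neg (not_lt.2 hlt.le)]
          rw [hfx] at hr
          have hev : ∀ᶠ z in 𝓝[>] x, slope φ x z < r := by
            filter_upwards [nhdsWithin_le_nhds hnear,
              (hsη x).eventually_lt_const hr] with z hz1 hz2
            have hφz : φ z = η z := max_eq_right hz1.le
            have hφx : φ x = η x := max_eq_right hlt.le
            rw [slope_def_field, hφz, hφx, ← slope_def_field]
            exact hz2
          exact hev.frequently
        · have hfx : f' x = max (deriv ξ x) (deriv η x) := by
            simp only [hf'def, if_pos heq]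
          rw [hfx, max_lt_iff] at hr
          have hev : ∀ᶠ z in 𝓝[>] x, slope φ x z < r := by
            filter_upwards [(hsξ x).eventually_lt_const hr.1,
              (hsη x).eventually_lt_const hr.2, self_mem_nhdsWithin]
              with z hz1 hz2 (hz3 : x < z)
            rw [slope_def_field] at hz1 hz2 ⊢
            have hφx : φ x = ξ x := max_eq_left heq.ge
            rw [hφx]
            rcases max_cases (ξ z) (η z) with ⟨h, _⟩ | ⟨h, _⟩
            · simpa [hφ, h] using hz1
            · simp only [hφ, h]
              rw [heq]
              exact hz2
          exact hev.frequently
        · have hnear : ∀ᶠ z in 𝓝 x, η z < ξ z :=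
            (hη.continuous.continuousAt).eventually_lt (hξ.continuous.continuousAt) hgt
          have hfx : f' x = deriv ξ x := by
            simp only [hf'def]
            rw [if_neg (ne_of_gt hgt), if_pos hgt]
          rw [hfx] at hr
          have hev : ∀ᶠ z in 𝓝[>] x, slope φ x z < r := by
            filter_upwards [nhdsWithin_le_nhds hnear,
              (hsξ x).eventually_lt_const hr] with z hz1 hz2
            have hφz : φ z = ξ z := max_eq_left hz1.le
            have hφx : φ x = ξ x := max_eq_left hgt.le
            rw [slope_def_field, hφz, hφx, ← slope_def_field]
            exact hz2
          exact hev.frequently)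
      (B := fun x => K + ε * (x + 1)) (B' := fun _ => ε)
      (by
        show φ 0 ≤ K + ε * (0 + 1)
        have : φ 0 ≤ K := max_le
          ((le_max_left _ _).trans (le_max_right _ _))
          ((le_max_right _ _).trans (le_max_right _ _))
        nlinarith)
      (by fun_prop)
      (by
        intro x _
        have : HasDerivAt (fun x : ℝ => K + ε * (x + 1)) ε x := by
          simpa using (((hasDerivAt_id x).add_const 1).const_mul ε).const_add K
        exact this.hasDerivWithinAt)
      (by
        intro x hx hfb
        have hfb' : φ x = K + ε * (x + 1) := hfb
        have hx0 : (0:ℝ) ≤ x := hx.1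
        have hBx : χ ≤ φ x := by nlinarith
        rcases lt_trichotomy (ξ x) (η x) with hlt | heq | hgt
        · have hφx : φ x = η x := max_eq_right hlt.le
          have := h2 x hx0 hlt.le (hφx ▸ hBx)
          have hfx : f' x = deriv η x := by
            simp only [hf'def]
            rw [if_neg (ne_of_lt hlt), if_neg (not_lt.2 hlt.le)]
          rw [hfx]
          linarith
        · have hφx : φ x = ξ x := max_eq_left heq.ge
          have c1 := h1 x hx0 heq.ge (hφx ▸ hBx)
          have c2 := h2 x hx0 heq.le (heq ▸ (hφx ▸ hBx))
          have hfx : f' x = max (deriv ξ x) (deriv η x) := by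
            simp only [hf'def, if_pos heq]
          rw [hfx]
          exact lt_of_le_of_lt (max_le c1 c2) hε
        · have hφx : φ x = ξ x := max_eq_left hgt.le
          have := h1 x hx0 hgt.le (hφx ▸ hBx)
          have hfx : f' x = deriv ξ x := by
            simp only [hf'def]
            rw [if_neg (ne_of_gt hgt), if_pos hgt]
          rw [hfx]
          linarith)
    exact main (right_mem_Icc.2 ht)
  have hfin : φ t ≤ K := by
    by_contra h
    push_neg at h
    have ht1 : 0 < t + 1 := by linarith
    have hεpos : 0 < (φ t - K) / (2 * (t + 1)) := by
      apply div_pos (by linarith) (by linarith)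
    have hk := key _ hεpos
    have hne : (φ t - K) / (2 * (t + 1)) * (t + 1) = (φ t - K) / 2 := by
      field_simp
    rw [hne] at hk
    linarith
  exact hfin
end

section
/- Let μ be a probability measure on ℝ, G: ℝ → ℝ an odd increasing function, k ≥ 1 an integer, and suppose all relevant integrals are finite. Then ∫∫ sign(x)|x|^{2k-1} G(x - y) μ(dy) μ(dx) ≥ 0. -/
/-!
Writing `f x = sign x * |x| ^ n`, which is monotone, and swapping the roles of `x` and `y`,
twice the double integral is `∫∫ (f x - f y) * G (x - y)`. Since `G` is odd and monotone,
`G (x - y)` has the sign of `x - y`, hence of `f x - f y`, so the integrand is nonnegative.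
-/

open MeasureTheory

theorem Real.monotone_sign_mul_abs_pow (n : ℕ) : Monotone fun x : ℝ => Real.sign x * |x| ^ n := by
  refine monotone_of_odd_of_monotoneOn_nonneg (fun x => by simp [Real.sign_neg]) ?_
  intro x (hx : 0 ≤ x) y (hy : 0 ≤ y) hxy
  rcases hx.eq_or_lt with rfl | hx
  · have hsign : 0 ≤ Real.sign y := by
      rcases hy.eq_or_lt with rfl | hy
      · simp [Real.sign_zero]
      · simp [Real.sign_of_pos hy]
    simpa [Real.sign_zero] using mul_nonneg hsign (pow_nonneg (abs_nonneg y) n)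
  · have hy := hx.trans_le hxy
    simp only [Real.sign_of_pos hx, Real.sign_of_pos hy, one_mul, abs_of_pos hx, abs_of_pos hy]
    exact pow_le_pow_left₀ hx.le hxy n

theorem mul_add_mul_swap_nonneg_of_monotone_of_odd {f G : ℝ → ℝ} (hf : Monotone f)
    (hodd : ∀ x, G (-x) = -G x) (hG : Monotone G) (x y : ℝ) :
    0 ≤ f x * G (x - y) + f y * G (y - x) := by
  have hG0 : G 0 = 0 := by linarith [neg_zero (G := ℝ) ▸ hodd 0]
  have hswap : G (y - x) = -G (x - y) := by rw [← hodd, neg_sub]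
  have hfactor : f x * G (x - y) + f y * -G (x - y) = (f x - f y) * G (x - y) := by ring
  rw [hswap, hfactor]
  rcases le_total y x with hyx | hxy
  · exact mul_nonneg (sub_nonneg.2 (hf hyx)) (hG0 ▸ hG (sub_nonneg.2 hyx))
  · exact mul_nonneg_of_nonpos_of_nonpos (sub_nonpos.2 (hf hxy)) (hG0 ▸ hG (sub_nonpos.2 hxy))

theorem integral_integral_nonneg_of_add_swap_nonneg {α : Type*} [MeasurableSpace α]
    {μ : Measure α} [SFinite μ] {K : α → α → ℝ}
    (hK : Integrable (fun p : α × α => K p.1 p.2) (μ.prod μ)) (hpos : ∀ x y, 0 ≤ K x y + K y x) :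
    0 ≤ ∫ x, ∫ y, K x y ∂μ ∂μ := by
  have hswap : ∫ p : α × α, K p.2 p.1 ∂μ.prod μ = ∫ p : α × α, K p.1 p.2 ∂μ.prod μ :=
    integral_prod_swap (fun p : α × α => K p.1 p.2)
  have hsum : 0 ≤ ∫ p : α × α, (K p.1 p.2 + K p.2 p.1) ∂μ.prod μ :=
    integral_nonneg fun p => hpos p.1 p.2
  have hK_swap : Integrable (fun p : α × α => K p.2 p.1) (μ.prod μ) := hK.swap
  rw [integral_add hK hK_swap, hswap] at hsum
  rw [integral_integral hK]
  linarith

theorem odd_moment_convolution_nonneg_general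
    (μ : Measure ℝ) [IsProbabilityMeasure μ]
    (G : ℝ → ℝ) (hodd : ∀ x, G (-x) = -G x) (hmono : Monotone G)
    (k : ℕ)
    (hint : Integrable (fun p : ℝ × ℝ =>
      Real.sign p.1 * |p.1| ^ (2 * k - 1) * G (p.1 - p.2)) (μ.prod μ)) :
    0 ≤ ∫ x, ∫ y, Real.sign x * |x| ^ (2 * k - 1) * G (x - y) ∂μ ∂μ :=
  integral_integral_nonneg_of_add_swap_nonneg hint
    (mul_add_mul_swap_nonneg_of_monotone_of_odd (Real.monotone_sign_mul_abs_pow _) hodd hmono)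

theorem odd_moment_convolution_nonneg
    (μ : Measure ℝ) [IsProbabilityMeasure μ]
    (G : ℝ → ℝ) (hodd : ∀ x, G (-x) = -G x) (hmono : Monotone G)
    (k : ℕ) (hk : 1 ≤ k)
    (hint : Integrable (fun p : ℝ × ℝ =>
      Real.sign p.1 * |p.1| ^ (2 * k - 1) * G (p.1 - p.2)) (μ.prod μ)) :
    0 ≤ ∫ x, ∫ y, Real.sign x * |x| ^ (2 * k - 1) * G (x - y) ∂μ ∂μ :=
  odd_moment_convolution_nonneg_general μ G hodd hmono k hint
end
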